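/- Size commutation: let i be a size variable, s a size such that s = ∞ or the spine variable of s is different from i, and ρ a size environment. Then for every p ∈ [0,1]: VRed^p_{σ[s/i],ρ} = VRed^p_{σ, ρ[i ↦ ⟦s⟧_ρ]}, DRed^p_{μ[s/i],ρ} = DRed^p_{μ, ρ[i ↦ ⟦s⟧_ρ]}, and TRed^p_{μ[s/i],ρ} = TRed^p_{μ, ρ[i ↦ ⟦s⟧_ρ]}. -/

import Mathlib

open scoped ENNReal

noncomputable section

/-! ### Syntax of the probabilistic λ-calculus λ⊕ (A-normal form) -/

mutual
inductive Val : Type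
  | var : ℕ → Val
  | zero : Val
  | succ : Val → Val
  | lam : ℕ → Tm → Val
  | letrec : ℕ → Val → Val
inductive Tm : Type
  | val : Val → Tm
  | app : Val → Val → Tm
  | letin : ℕ → Tm → Tm → Tm
  | choice : ℝ≥0∞ → Tm → Tm → Tm
  | case : Val → Val → Val → Tm
end

/-- Numerals `S^n 0`. -/
def natVal : ℕ → Val
  | 0 => .zero
  | n + 1 => .succ (natVal n)

mutual
/-- Free variables of a value. -/
def Val.fv : Val → Finset ℕ
  | .var x => {x}
  | .zero => ∅
  | .succ v => Val.fv v
  | .lam x M => (Tm.fv M).erase x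
  | .letrec f v => (Val.fv v).erase f
/-- Free variables of a term. -/
def Tm.fv : Tm → Finset ℕ
  | .val v => Val.fv v
  | .app v w => Val.fv v ∪ Val.fv w
  | .letin x M N => Tm.fv M ∪ (Tm.fv N).erase x
  | .choice _ M N => Tm.fv M ∪ Tm.fv N
  | .case v w z => Val.fv v ∪ Val.fv w ∪ Val.fv z
end

mutual
/-- Well-formedness of a value: all probabilities in choices lie in (0,1). -/
def Val.WFp : Val → Prop
  | .var _ => True
  | .zero => True
  | .succ v => Val.WFp v
  | .lam _ M => Tm.WFp M
  | .letrec _ v => Val.WFp v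
/-- Well-formedness of a term: all probabilities in choices lie in (0,1). -/
def Tm.WFp : Tm → Prop
  | .val v => Val.WFp v
  | .app v w => Val.WFp v ∧ Val.WFp w
  | .letin _ M N => Tm.WFp M ∧ Tm.WFp N
  | .choice p M N => 0 < p ∧ p < 1 ∧ Tm.WFp M ∧ Tm.WFp N
  | .case v w z => Val.WFp v ∧ Val.WFp w ∧ Val.WFp z
end

mutual
/-- Parallel (capture-naive) substitution of values for variables in a value;
intended to be used with closed substituted values only. -/
def Val.psubst : (ℕ → Option Val) → Val → Val
  | ς, .var y => (ς y).getD (.var y)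
  | _, .zero => .zero
  | ς, .succ v => .succ (Val.psubst ς v)
  | ς, .lam y M => .lam y (Tm.psubst (fun z => if z = y then none else ς z) M)
  | ς, .letrec g v => .letrec g (Val.psubst (fun z => if z = g then none else ς z) v)
/-- Parallel substitution in a term. -/
def Tm.psubst : (ℕ → Option Val) → Tm → Tm
  | ς, .val v => .val (Val.psubst ς v)
  | ς, .app v w => .app (Val.psubst ς v) (Val.psubst ς w)
  | ς, .letin y M N =>
      .letin y (Tm.psubst ς M) (Tm.psubst (fun z => if z = y then none else ς z) N)
  | ς, .choice p M N => .choice p (Tm.psubst ς M) (Tm.psubst ς N)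
  | ς, .case v w z => .case (Val.psubst ς v) (Val.psubst ς w) (Val.psubst ς z)
end

/-- Substitution of a single value in a value. -/
def Val.subst1 (x : ℕ) (U : Val) (v : Val) : Val :=
  Val.psubst (fun z => if z = x then some U else none) v

/-- Substitution of a single value in a term. -/
def Tm.subst1 (x : ℕ) (U : Val) (M : Tm) : Tm :=
  Tm.psubst (fun z => if z = x then some U else none) M

/-! ### Distributions -/

/-- (Sub)distributions over `X`. -/
abbrev Distr (X : Type) := X → ℝ≥0∞

/-- The sum `|D|` of a distribution. -/
def Distr.mass {X : Type} (D : Distr X) : ℝ≥0∞ := ∑' x, D x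

open Classical in
/-- The Dirac distribution. -/
def Distr.dirac {X : Type} (a : X) : Distr X := fun b => if b = a then 1 else 0

open Classical in
/-- Pushforward of a distribution. -/
def Distr.map {X Y : Type} (f : X → Y) (D : Distr X) : Distr Y :=
  fun y => ∑' x, if f x = y then D x else 0

/-- Finite distributions. -/
def Distr.FinSupp {X : Type} (D : Distr X) : Prop := {x | D x ≠ 0}.Finite

open Classical in
/-- `[V i ^ pr i | i]` is a (finite) pseudo-representation of `D`. -/
def PseudoRep {X : Type} (D : Distr X) {n : ℕ} (V : Fin n → X) (pr : Fin n → ℝ≥0∞) : Prop :=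
  (∀ i, 0 < D (V i)) ∧ ∀ x, D x = ∑ i, if V i = x then pr i else 0

open Classical in
/-- `[V j ^ pr j | j ∈ J]` is a pseudo-representation of `D` (general countable index). -/
def PseudoRep' {X : Type} (D : Distr X) {J : Type} [Countable J] (V : J → X)
    (pr : J → ℝ≥0∞) : Prop :=
  (∀ j, 0 < D (V j)) ∧ ∀ x, D x = ∑' j, if V j = x then pr j else 0

/-! ### Call-by-value operational semantics -/

open Classical in
/-- One step of call-by-value reduction, as a function from terms to distributions of terms.
Values (and stuck terms) reduce to themselves. -/
def stepFn : Tm → Distr Tm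
  | .val v => Distr.dirac (.val v)
  | .app (.lam x M) w => Distr.dirac (Tm.subst1 x w M)
  | .app (.letrec f v) w =>
      if w = Val.zero ∨ ∃ w', w = Val.succ w' then
        Distr.dirac (.app (Val.subst1 f (.letrec f v) v) w)
      else Distr.dirac (.app (.letrec f v) w)
  | .app v w => Distr.dirac (.app v w)
  | .letin x (.val v) N => Distr.dirac (Tm.subst1 x v N)
  | .letin x M N => Distr.map (fun K => Tm.letin x K N) (stepFn M)
  | .choice p M N => fun L => (if L = M then p else 0) + (if L = N then 1 - p else 0)
  | .case (.succ v) w _ => Distr.dirac (.app w v)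
  | .case .zero _ z => Distr.dirac (.val z)
  | .case v w z => Distr.dirac (.case v w z)

/-- One step of reduction `→ᵥ` on distributions of terms. -/
def stepD (D : Distr Tm) : Distr Tm := fun N => ∑' M, D M * stepFn M N

/-- The distribution obtained from `{M¹}` after `n` steps of `→ᵥ`. -/
def approxT (M : Tm) (n : ℕ) : Distr Tm := stepD^[n] (Distr.dirac M)

/-- `M ⇒ᵥⁿ approxV M n` : restriction to values of the `n`-step reduct of `{M¹}`. -/
def approxV (M : Tm) (n : ℕ) : Distr Val := fun v => approxT M n (.val v)

/-- The semantics `⟦M⟧` of a term: the lub of its value approximants. -/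
def sem (M : Tm) : Distr Val := fun v => ⨆ n, approxV M n v

/-- Almost-sure termination. -/
def Tm.AST (M : Tm) : Prop := Distr.mass (sem M) = 1

/-! ### Affine simple types -/

inductive SimpleTy : Type
  | nat : SimpleTy
  | arrow : SimpleTy → SimpleTy → SimpleTy
deriving DecidableEq

/-- Simple-type contexts. -/
abbrev SCtx := ℕ → Option SimpleTy

def SCtx.empty : SCtx := fun _ => none

def SCtx.ext (Γ : SCtx) (x : ℕ) (κ : SimpleTy) : SCtx := fun z => if z = x then some κ else Γ z

/-- Affine contraction `Γ ⊎ Δ = Ω` : shared variables must have type `Nat`. -/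
def AffUnion (Γ Δ Ω : SCtx) : Prop := ∀ x,
  match Γ x, Δ x with
  | some κ, some κ' => κ = SimpleTy.nat ∧ κ' = SimpleTy.nat ∧ Ω x = some SimpleTy.nat
  | some κ, none => Ω x = some κ
  | none, some κ' => Ω x = some κ'
  | none, none => Ω x = none

/-- Non-affine contraction `Γ ∪ Δ = Ω` : shared variables must have the same type. -/
def ChUnion (Γ Δ Ω : SCtx) : Prop := ∀ x,
  match Γ x, Δ x with
  | some κ, some κ' => κ = κ' ∧ Ω x = some κ
  | some κ, none => Ω x = some κ
  | none, some κ' => Ω x = some κ'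
  | none, none => Ω x = none

mutual
/-- Affine simple typing of values (Figure 1). -/
inductive SimpTyV : SCtx → Val → SimpleTy → Prop
  | var {Γ : SCtx} {x κ} : Γ x = some κ → SimpTyV Γ (.var x) κ
  | zero {Γ : SCtx} : SimpTyV Γ .zero .nat
  | succ {Γ : SCtx} {v} : SimpTyV Γ v .nat → SimpTyV Γ (.succ v) .nat
  | lam {Γ : SCtx} {x M κ κ'} :
      SimpTyT (SCtx.ext Γ x κ) M κ' → SimpTyV Γ (.lam x M) (.arrow κ κ')
  | letrec {Γ : SCtx} {f v κ} :
      (∀ y κ'', Γ y = some κ'' → κ'' = SimpleTy.nat) →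
      SimpTyV (SCtx.ext Γ f (.arrow .nat κ)) v (.arrow .nat κ) →
      SimpTyV Γ (.letrec f v) (.arrow .nat κ)
/-- Affine simple typing of terms (Figure 1). -/
inductive SimpTyT : SCtx → Tm → SimpleTy → Prop
  | val {Γ : SCtx} {v κ} : SimpTyV Γ v κ → SimpTyT Γ (.val v) κ
  | app {Γ Δ Ω : SCtx} {v w κ κ'} :
      AffUnion Γ Δ Ω → SimpTyV Γ v (.arrow κ κ') → SimpTyV Δ w κ →
      SimpTyT Ω (.app v w) κ'
  | letin {Γ Δ Ω : SCtx} {x M N κ κ'} :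
      AffUnion Γ Δ Ω → SimpTyT Γ M κ → SimpTyT (SCtx.ext Δ x κ) N κ' →
      SimpTyT Ω (.letin x M N) κ'
  | choice {Γ Δ Ω : SCtx} {p M N κ} :
      ChUnion Γ Δ Ω → SimpTyT Γ M κ → SimpTyT Δ N κ →
      SimpTyT Ω (.choice p M N) κ
  | case {Γ Δ Ω : SCtx} {v w z κ} :
      AffUnion Γ Δ Ω → SimpTyV Γ v .nat → SimpTyV Δ w (.arrow .nat κ) →
      SimpTyV Δ z κ → SimpTyT Ω (.case v w z) κ
end

/-! ### Sizes -/

inductive Size : Type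
  | var : ℕ → Size
  | inf : Size
  | succ : Size → Size
deriving DecidableEq

/-- Size environments. -/
abbrev SEnv := ℕ → ℕ∞

/-- Interpretation `⟦s⟧_ρ` of a size. -/
def Size.interp (ρ : SEnv) : Size → ℕ∞
  | .var i => ρ i
  | .inf => ⊤
  | .succ s => Size.interp ρ s + 1

/-- The spine variable of a size, if any. -/
def Size.spine : Size → Option ℕ
  | .var i => some i
  | .inf => none
  | .succ s => Size.spine s

/-- Substitution of a size for a size variable. -/
def Size.subst (i : ℕ) (r : Size) : Size → Size
  | .var j => if j = i then r else .var j
  | .inf => .inf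
  | .succ s => .succ (Size.subst i r s)

/-- Iterated successor `succ^k s`. -/
def Size.iter : ℕ → Size → Size
  | 0, s => s
  | k + 1, s => .succ (Size.iter k s)

/-- Occurrence of a size variable in a size. -/
def Size.hasVar (i : ℕ) : Size → Prop
  | .var j => j = i
  | .inf => False
  | .succ s => Size.hasVar i s

/-- The order `≼` on sizes. -/
inductive SizeLE : Size → Size → Prop
  | refl (s) : SizeLE s s
  | trans {s r t} : SizeLE s r → SizeLE r t → SizeLE s t
  | succ (s) : SizeLE s (.succ s)
  | inf (s) : SizeLE s .inf

/-! ### Sized types and distribution types -/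

mutual
/-- Sized types. -/
inductive STy : Type
  | nat : Size → STy
  | arrow : STy → DTy → STy
/-- Distribution types, as finite nonempty formal lists of weighted sized types. -/
inductive DTy : Type
  | single : STy → ℝ≥0∞ → DTy
  | cons : STy → ℝ≥0∞ → DTy → DTy
end

mutual
/-- Underlying simple type of a sized type. -/
def STy.erase : STy → SimpleTy
  | .nat _ => .nat
  | .arrow σ μ => .arrow (STy.erase σ) (DTy.eraseU μ)
/-- Underlying simple type of a distribution type. -/
def DTy.eraseU : DTy → SimpleTy
  | .single σ _ => STy.erase σ
  | .cons σ _ _ => STy.erase σ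
end

/-- The list of entries of a distribution type. -/
def DTy.toList : DTy → List (STy × ℝ≥0∞)
  | .single σ p => [(σ, p)]
  | .cons σ p μ => (σ, p) :: DTy.toList μ

open Classical in
/-- The probability `μ(τ)` assigned by a distribution type to a sized type. -/
def DTy.prob : DTy → STy → ℝ≥0∞
  | .single σ p, τ => if σ = τ then p else 0
  | .cons σ p μ, τ => (if σ = τ then p else 0) + DTy.prob μ τ

/-- The sum `|μ|` of a distribution type. -/
def DTy.mass : DTy → ℝ≥0∞
  | .single _ p => p
  | .cons _ p μ => p + DTy.mass μ

/-- Well-formedness of distribution types: sum at most one, uniform underlying type. -/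
def DTy.WF (μ : DTy) : Prop :=
  DTy.mass μ ≤ 1 ∧ ∀ e ∈ DTy.toList μ, STy.erase e.1 = DTy.eraseU μ

mutual
/-- Size substitution in a sized type. -/
def STy.substSize (i : ℕ) (s : Size) : STy → STy
  | .nat r => .nat (Size.subst i s r)
  | .arrow σ μ => .arrow (STy.substSize i s σ) (DTy.substSize i s μ)
/-- Size substitution in a distribution type. -/
def DTy.substSize (i : ℕ) (s : Size) : DTy → DTy
  | .single σ p => .single (STy.substSize i s σ) p
  | .cons σ p μ => .cons (STy.substSize i s σ) p (DTy.substSize i s μ)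
end

mutual
/-- Occurrence of a size variable in a sized type. -/
def STy.hasVar (i : ℕ) : STy → Prop
  | .nat s => Size.hasVar i s
  | .arrow σ μ => STy.hasVar i σ ∨ DTy.hasVar i μ
/-- Occurrence of a size variable in a distribution type. -/
def DTy.hasVar (i : ℕ) : DTy → Prop
  | .single σ _ => STy.hasVar i σ
  | .cons σ _ μ => STy.hasVar i σ ∨ DTy.hasVar i μ
end

mutual
/-- Positive occurrences of a size variable in a sized type. -/
inductive PosS : ℕ → STy → Prop
  | nat (i s) : PosS i (.nat s)
  | arrow {i σ μ} : NegS i σ → PosD i μ → PosS i (.arrow σ μ)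
/-- Negative occurrences of a size variable in a sized type. -/
inductive NegS : ℕ → STy → Prop
  | nat {i s} : ¬ Size.hasVar i s → NegS i (.nat s)
  | arrow {i σ μ} : PosS i σ → NegD i μ → NegS i (.arrow σ μ)
/-- Positivity for distribution types. -/
inductive PosD : ℕ → DTy → Prop
  | single {i σ p} : PosS i σ → PosD i (.single σ p)
  | cons {i σ p μ} : PosS i σ → PosD i μ → PosD i (.cons σ p μ)
/-- Negativity for distribution types. -/
inductive NegD : ℕ → DTy → Prop
  | single {i σ p} : NegS i σ → NegD i (.single σ p)
  | cons {i σ p μ} : NegS i σ → NegD i μ → NegD i (.cons σ p μ)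
end

open Classical in
mutual
/-- Subtyping of sized types. -/
inductive SubS : STy → STy → Prop
  | refl (σ) : SubS σ σ
  | nat {s r} : SizeLE s r → SubS (.nat s) (.nat r)
  | arrow {σ τ μ ν} : SubS τ σ → SubD μ ν → SubS (.arrow σ μ) (.arrow τ ν)
/-- Subtyping of distribution types. -/
inductive SubD : DTy → DTy → Prop
  | intro (μ ν : DTy) (f : Fin (DTy.toList μ).length → Fin (DTy.toList ν).length) :
      (∀ a, SubS ((DTy.toList μ).get a).1 ((DTy.toList ν).get (f a)).1) →
      (∀ b, (∑ a, if f a = b then ((DTy.toList μ).get a).2 else 0) ≤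
          ((DTy.toList ν).get b).2) →
      SubD μ ν
end

/-- Pointwise order `≼` on distribution types (as distributions of sized types). -/
def DTy.le (μ ν : DTy) : Prop := ∀ τ, DTy.prob μ τ ≤ DTy.prob ν τ

/-- The Dirac distribution type `{σ¹}`. -/
def DTy.diracAt (σ : STy) : DTy := .single σ 1

/-- A distribution type is Dirac if it denotes a Dirac distribution of types. -/
def DTy.IsDirac (μ : DTy) : Prop := ∃ σ, ∀ τ, DTy.prob μ τ = DTy.prob (DTy.diracAt σ) τ

/-- Scaling of a distribution type. -/
def DTy.scale (c : ℝ≥0∞) : DTy → DTy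
  | .single σ p => .single σ (c * p)
  | .cons σ p μ => .cons σ (c * p) (DTy.scale c μ)

/-- Concatenation of distribution types. -/
def DTy.append : DTy → DTy → DTy
  | .single σ p, ν => .cons σ p ν
  | .cons σ p μ, ν => .cons σ p (DTy.append μ ν)

/-- Probabilistic sum `μ ⊕ₚ ν = p·μ + (1-p)·ν` of distribution types. -/
def DTy.mix (p : ℝ≥0∞) (μ ν : DTy) : DTy := DTy.append (DTy.scale p μ) (DTy.scale (1 - p) ν)

/-! ### Sized walks -/

/-- Probabilities of convergence in finite time of the sized walk with jump distribution `g`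
(`g k` = probability to move from `m+1` to `m+k`): `Pr g n m` is the probability to reach `0`
from `m` in at most `n` steps. -/
def Pr (g : ℕ → ℝ≥0∞) : ℕ → ℕ → ℝ≥0∞
  | 0, m => if m = 0 then 1 else 0
  | n + 1, m =>
      if m = 0 then 1
      else (∑' k, g k * Pr g n (m - 1 + k)) + (1 - ∑' k, g k)

/-- A sized walk is almost surely terminating. -/
def WalkAST (g : ℕ → ℝ≥0∞) : Prop := ∀ m, (⨆ n, Pr g n m) = 1

/-- The jump distribution of the sized walk induced by the data `(k_j, p_j)_j`. -/
def inducedWalk (J : List (ℕ × ℝ≥0∞)) : ℕ → ℝ≥0∞ :=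
  fun k => (J.map (fun e => if e.1 = k then e.2 else 0)).sum

/-! ### Monadic affine sized typing (Figure 2) -/

/-- Sized contexts. -/
abbrev SzCtx := ℕ → Option STy

def SzCtx.empty : SzCtx := fun _ => none

def SzCtx.dom (Γ : SzCtx) : Set ℕ := {x | Γ x ≠ none}

def SzCtx.ext (Γ : SzCtx) (x : ℕ) (σ : STy) : SzCtx := fun z => if z = x then some σ else Γ z

def SzCtx.union (Γ Δ : SzCtx) : SzCtx := fun x => (Γ x).orElse (fun _ => Δ x)

/-- Disjointness of sized contexts. -/
def SzDisj (Γ Δ : SzCtx) : Prop := ∀ x, Γ x = none ∨ Δ x = none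

/-- A sized context whose types all refine `Nat`. -/
def SzCtx.natOnly (Γ : SzCtx) : Prop := ∀ x σ, Γ x = some σ → STy.erase σ = SimpleTy.nat

/-- Distribution contexts: at most one variable with a distribution type. -/
abbrev DCtx := Option (ℕ × DTy)

/-- Disjoint join `Θ, Ψ = Ω` of distribution contexts. -/
def DJoin (Θ Ψ Ω : DCtx) : Prop := (Θ = none ∧ Ω = Ψ) ∨ (Ψ = none ∧ Ω = Θ)

/-- Probabilistic sum `Θ ⊕ₚ Ψ = Ω` of distribution contexts. -/
def DChoiceJoin (p : ℝ≥0∞) : DCtx → DCtx → DCtx → Prop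
  | none, none, Ω => Ω = none
  | some (x, μ), none, Ω => Ω = some (x, DTy.scale p μ)
  | none, some (y, ν), Ω => Ω = some (y, DTy.scale (1 - p) ν)
  | some (x, μ), some (y, ν), Ω =>
      x = y ∧ DTy.eraseU μ = DTy.eraseU ν ∧ Ω = some (x, DTy.mix p μ ν)

/-- Weighted sum `∑ᵢ prᵢ · Ψᵢ = Ω` of distribution contexts. -/
def DWeightedSum {n : ℕ} (pr : Fin n → ℝ≥0∞) (Ψ : Fin n → DCtx) (Ω : DCtx) : Prop :=
  ((∀ a, Ψ a = none) ∧ Ω = none) ∨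
  (∃ (y : ℕ) (ν : Fin n → DTy),
    (∀ a, Ψ a = some (y, ν a)) ∧
    (∀ a b, DTy.eraseU (ν a) = DTy.eraseU (ν b)) ∧
    (∑ a, pr a) ≤ 1 ∧
    ∃ ξ : DTy, Ω = some (y, ξ) ∧ ∀ τ, DTy.prob ξ τ = ∑ a, pr a * DTy.prob (ν a) τ)

mutual
/-- Monadic affine sized typing of values (Figure 2). -/
inductive MTyV : SzCtx → DCtx → Val → STy → Prop
  | var {Γ : SzCtx} {Θ x σ} : Γ x = some σ → MTyV Γ Θ (.var x) σ
  | var' {Γ : SzCtx} {x σ} : MTyV Γ (some (x, DTy.diracAt σ)) (.var x) σ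
  | zero {Γ : SzCtx} {Θ s} : MTyV Γ Θ .zero (.nat (.succ s))
  | succ {Γ : SzCtx} {Θ v s} : MTyV Γ Θ v (.nat s) → MTyV Γ Θ (.succ v) (.nat (.succ s))
  | lam {Γ : SzCtx} {Θ x M σ μ} :
      MTyT (SzCtx.ext Γ x σ) Θ M μ → MTyV Γ Θ (.lam x M) (.arrow σ μ)
  | sub {Γ : SzCtx} {Θ v σ τ} : MTyV Γ Θ v σ → SubS σ τ → MTyV Γ Θ v τ
  | letrec {Γ Δ : SzCtx} {Θ f v} {i : ℕ} {ν : DTy} {J : List (ℕ × ℝ≥0∞)} {μ : DTy} {r : Size} :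
      SzCtx.natOnly Γ → SzDisj Γ Δ → Γ f = none →
      (∀ x σ, Γ x = some σ → ¬ STy.hasVar i σ) →
      PosD i ν →
      DTy.toList μ = J.map (fun e =>
        (STy.arrow (.nat (Size.iter e.1 (.var i)))
          (DTy.substSize i (Size.iter e.1 (.var i)) ν), e.2)) →
      WalkAST (inducedWalk J) →
      MTyV Γ (some (f, μ)) v
        (.arrow (.nat (.succ (.var i))) (DTy.substSize i (.succ (.var i)) ν)) →
      MTyV (SzCtx.union Γ Δ) Θ (.letrec f v) (.arrow (.nat r) (DTy.substSize i r ν))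
/-- Monadic affine sized typing of terms (Figure 2). -/
inductive MTyT : SzCtx → DCtx → Tm → DTy → Prop
  | val {Γ : SzCtx} {Θ v σ} : MTyV Γ Θ v σ → MTyT Γ Θ (.val v) (DTy.diracAt σ)
  | sub {Γ : SzCtx} {Θ M μ ν} : MTyT Γ Θ M μ → SubD μ ν → MTyT Γ Θ M ν
  | app {Γ Δ Ξ : SzCtx} {Θ Ψ Ω : DCtx} {v w σ μ} :
      SzCtx.natOnly Γ → SzDisj Γ Δ → SzDisj Γ Ξ → SzDisj Δ Ξ →
      DJoin Θ Ψ Ω →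
      MTyV (SzCtx.union Γ Δ) Θ v (.arrow σ μ) →
      MTyV (SzCtx.union Γ Ξ) Ψ w σ →
      MTyT (SzCtx.union Γ (SzCtx.union Δ Ξ)) Ω (.app v w) μ
  | choice {Γ : SzCtx} {Θ Ψ Ω : DCtx} {p M N μ ν} :
      0 < p → p < 1 → DTy.eraseU μ = DTy.eraseU ν →
      DChoiceJoin p Θ Ψ Ω →
      MTyT Γ Θ M μ → MTyT Γ Ψ N ν →
      MTyT Γ Ω (.choice p M N) (DTy.mix p μ ν)
  | letin {Γ Δ Ξ : SzCtx} {Θ : DCtx} {x M N} {μ : DTy}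
      {νf : Fin (DTy.toList μ).length → DTy}
      {Ψ : Fin (DTy.toList μ).length → DCtx} {Ω₀ Ω : DCtx} {ξ : DTy} :
      SzCtx.natOnly Γ → SzDisj Γ Δ → SzDisj Γ Ξ → SzDisj Δ Ξ →
      MTyT (SzCtx.union Γ Δ) Θ M μ →
      (∀ a, MTyT (SzCtx.ext (SzCtx.union Γ Ξ) x ((DTy.toList μ).get a).1) (Ψ a) N (νf a)) →
      DWeightedSum (fun a => ((DTy.toList μ).get a).2) Ψ Ω₀ →
      DJoin Θ Ω₀ Ω →
      (∀ τ, DTy.prob ξ τ = ∑ a, ((DTy.toList μ).get a).2 * DTy.prob (νf a) τ) →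
      MTyT (SzCtx.union Γ (SzCtx.union Δ Ξ)) Ω (.letin x M N) ξ
  | case {Γ Δ : SzCtx} {Θ : DCtx} {v w z s μ} :
      SzDisj Γ Δ →
      MTyV Γ none v (.nat (.succ s)) →
      MTyV Δ Θ w (.arrow (.nat s) μ) →
      MTyT Δ Θ (.val z) μ →
      MTyT (SzCtx.union Γ Δ) Θ (.case v w z) μ
end

/-! ### Reducibility sets -/

/-- Builder `DRed` from a family of value reducibility sets. -/
def mkDRed (vred : STy → ℝ≥0∞ → Set Val) (μ : DTy) (p : ℝ≥0∞) : Set (Distr Val) :=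
  { D | Distr.FinSupp D ∧
    ∃ (n : ℕ) (V : Fin n → Val) (pr : Fin n → ℝ≥0∞),
      PseudoRep D V pr ∧
      ∃ pm qm : Fin n → Fin (DTy.toList μ).length → ℝ≥0∞,
        (∀ a b, pm a b ≤ 1) ∧ (∀ a b, qm a b ≤ 1) ∧
        (∀ a b, V a ∈ vred ((DTy.toList μ).get b).1 (qm a b)) ∧
        (∀ a, (∑ b, pm a b) = pr a) ∧
        (∀ b, (∑ a, pm a b) = ((DTy.toList μ).get b).2) ∧
        p ≤ ∑ a, ∑ b, qm a b * pm a b }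

/-- Builder `TRed` from a family of value reducibility sets. -/
def mkTRed (κ : SimpleTy) (vred : STy → ℝ≥0∞ → Set Val) (μ : DTy) (p : ℝ≥0∞) : Set Tm :=
  { M | SimpTyT SCtx.empty M κ ∧
    ∀ r < p, ∃ ν : DTy, DTy.le ν μ ∧ (∀ e ∈ DTy.toList ν, STy.erase e.1 = κ) ∧
      ∃ n : ℕ, approxV M n ∈ mkDRed vred ν r }

/-- The reducibility sets of values, by induction on the underlying simple type. -/
def VRed : SimpleTy → STy → SEnv → ℝ≥0∞ → Set Val
  | .nat, .nat s, ρ, p =>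
      { v | ∃ n : ℕ, v = natVal n ∧ (0 < p → (n : ℕ∞) < Size.interp ρ s) }
  | .nat, _, _, _ => ∅
  | .arrow κ κ', .arrow σ' μ, ρ, p =>
      { v | SimpTyV SCtx.empty v (.arrow κ κ') ∧
        ∀ q : ℝ≥0∞, 0 < q → q ≤ 1 → ∀ w ∈ VRed κ σ' ρ q,
          Tm.app v w ∈ mkTRed κ' (fun τ r => VRed κ' τ ρ r) μ (p * q) }
  | .arrow _ _, _, _, _ => ∅

/-- `VRed^p_{σ,ρ}`. -/
def VRedS (σ : STy) (ρ : SEnv) (p : ℝ≥0∞) : Set Val := VRed (STy.erase σ) σ ρ p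

/-- `DRed^p_{μ,ρ}`. -/
def DRedS (μ : DTy) (ρ : SEnv) (p : ℝ≥0∞) : Set (Distr Val) :=
  mkDRed (fun τ r => VRed (DTy.eraseU μ) τ ρ r) μ p

/-- `TRed^p_{μ,ρ}`. -/
def TRedS (μ : DTy) (ρ : SEnv) (p : ℝ≥0∞) : Set Tm :=
  mkTRed (DTy.eraseU μ) (fun τ r => VRed (DTy.eraseU μ) τ ρ r) μ p

/-! ### Open reducibility sets -/

/-- Product of the degrees over the domain of a (finite-domain) sized context. -/
def ctxProd (Γ : SzCtx) (q : ℕ → ℝ≥0∞) : ℝ≥0∞ := ∏ᶠ x ∈ SzCtx.dom Γ, q x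

/-- `TRed^{Γ|Θ}_{μ,ρ}` : reducibility for open terms. -/
def TRedOpen (Γ : SzCtx) (Θ : DCtx) (μ : DTy) (ρ : SEnv) : Set Tm :=
  match Θ with
  | none =>
    { M | ∀ (q : ℕ → ℝ≥0∞) (v : ℕ → Val),
        (∀ x, q x ≤ 1) →
        (∀ x σ, Γ x = some σ → v x ∈ VRedS σ ρ (q x)) →
        Tm.psubst (fun z => (Γ z).map (fun _ => v z)) M ∈ TRedS μ ρ (ctxProd Γ q) }
  | some (y, τd) =>
    { M | ∀ (q : ℕ → ℝ≥0∞) (v : ℕ → Val)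
        (q' : Fin (DTy.toList τd).length → ℝ≥0∞) (W : Val),
        (∀ x, q x ≤ 1) →
        (∀ x σ, Γ x = some σ → v x ∈ VRedS σ ρ (q x)) →
        (∀ b, q' b ≤ 1) →
        (∀ b, W ∈ VRedS ((DTy.toList τd).get b).1 ρ (q' b)) →
        Tm.psubst (fun z => if z = y then some W else (Γ z).map (fun _ => v z)) M
          ∈ TRedS μ ρ (ctxProd Γ q *
              ((∑ b, ((DTy.toList τd).get b).2 * q' b) +
                (1 - ∑ b, ((DTy.toList τd).get b).2))) }

/-- `VRed^{Γ|Θ}_{σ,ρ}` : reducibility for open values. -/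
def VRedOpen (Γ : SzCtx) (Θ : DCtx) (σ : STy) (ρ : SEnv) : Set Val :=
  match Θ with
  | none =>
    { V | ∀ (q : ℕ → ℝ≥0∞) (v : ℕ → Val),
        (∀ x, q x ≤ 1) →
        (∀ x τ, Γ x = some τ → v x ∈ VRedS τ ρ (q x)) →
        Val.psubst (fun z => (Γ z).map (fun _ => v z)) V ∈ VRedS σ ρ (ctxProd Γ q) }
  | some (y, τd) =>
    { V | ∀ (q : ℕ → ℝ≥0∞) (v : ℕ → Val)
        (q' : Fin (DTy.toList τd).length → ℝ≥0∞) (W : Val),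
        (∀ x, q x ≤ 1) →
        (∀ x τ, Γ x = some τ → v x ∈ VRedS τ ρ (q x)) →
        (∀ b, q' b ≤ 1) →
        (∀ b, W ∈ VRedS ((DTy.toList τd).get b).1 ρ (q' b)) →
        Val.psubst (fun z => if z = y then some W else (Γ z).map (fun _ => v z)) V
          ∈ VRedS σ ρ (ctxProd Γ q *
              ((∑ b, ((DTy.toList τd).get b).2 * q' b) +
                (1 - ∑ b, ((DTy.toList τd).get b).2))) }

/-- `n`-unfolding of `letrec f = W`. -/
def unfold : ℕ → ℕ → Val → Val
  | 0, f, W => .letrec f W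
  | n + 1, f, W => Val.subst1 f (unfold n f W) W

end

/-!
Sizes enter the reducibility sets only at the base case `VRed^p_{Nat^r}`, where
`⟦r[s/i]⟧_ρ = ⟦r⟧_{ρ[i ↦ ⟦s⟧_ρ]}`, so the statement follows by induction on the underlying
simple type. The only obstacle is that `TRed^p_μ` quantifies over the `ν ≼ μ`, and substitution
can identify distinct sized types: a `ν ≼ μ[s/i]` is pulled back to some `ν' ≼ μ` by a
transport plan between the entries of `ν` and those of `μ`, along which the witnesses of
`DRed` are split.
-/

open Finset

theorem Size.interp_subst (i : ℕ) (s : Size) (ρ : SEnv) :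
    ∀ r : Size, (Size.subst i s r).interp ρ = r.interp (Function.update ρ i (s.interp ρ))
  | .var j => by
      by_cases h : j = i
      · subst h; simp [Size.subst, Size.interp]
      · simp [Size.subst, Size.interp, h]
  | .inf => rfl
  | .succ r => by simp [Size.subst, Size.interp, Size.interp_subst i s ρ r]

mutual
theorem STy.erase_substSize (i : ℕ) (s : Size) :
    ∀ σ : STy, (σ.substSize i s).erase = σ.erase
  | .nat _ => rfl
  | .arrow σ μ => by
      simp [STy.substSize, STy.erase, STy.erase_substSize i s σ, DTy.eraseU_substSize i s μ]
theorem DTy.eraseU_substSize (i : ℕ) (s : Size) :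
    ∀ μ : DTy, (μ.substSize i s).eraseU = μ.eraseU
  | .single σ _ => STy.erase_substSize i s σ
  | .cons σ _ _ => STy.erase_substSize i s σ
end

theorem DTy.toList_substSize (i : ℕ) (s : Size) :
    ∀ μ : DTy, (μ.substSize i s).toList = μ.toList.map fun e => (e.1.substSize i s, e.2)
  | .single _ _ => rfl
  | .cons σ p μ => by simp [DTy.substSize, DTy.toList, DTy.toList_substSize i s μ]

theorem DTy.length_toList_substSize (i : ℕ) (s : Size) (μ : DTy) :
    (μ.substSize i s).toList.length = μ.toList.length := by
  simp [DTy.toList_substSize]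

theorem DTy.get_toList_substSize (i : ℕ) (s : Size) (μ : DTy)
    (c : Fin (μ.substSize i s).toList.length) :
    (μ.substSize i s).toList.get c =
      ((μ.toList.get (c.cast (μ.length_toList_substSize i s))).1.substSize i s,
        (μ.toList.get (c.cast (μ.length_toList_substSize i s))).2) := by
  simp [DTy.toList_substSize]

theorem DTy.toList_length_pos : ∀ μ : DTy, 0 < μ.toList.length
  | .single _ _ => by simp [DTy.toList]
  | .cons _ _ _ => by simp [DTy.toList]

open Classical in
theorem DTy.prob_eq_sum : ∀ (μ : DTy) (t : STy),
    μ.prob t = ∑ c with (μ.toList.get c).1 = t, (μ.toList.get c).2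
  | .single σ p, t => by
      rw [sum_filter]
      show _ = ∑ c : Fin 1, _
      rw [Fin.sum_univ_one]; rfl
  | .cons σ p μ, t => by
      rw [sum_filter, DTy.prob, DTy.prob_eq_sum μ t, sum_filter]
      show _ = ∑ c : Fin (μ.toList.length + 1), _
      rw [Fin.sum_univ_succ]; rfl

open Classical in
theorem DTy.prob_substSize (i : ℕ) (s : Size) : ∀ (μ : DTy) (t : STy),
    (μ.substSize i s).prob t = ∑' u, if u.substSize i s = t then μ.prob u else 0
  | .single σ p, t => by
      rw [DTy.substSize, DTy.prob, ← tsum_ite_eq σ fun u => if u.substSize i s = t then p else 0]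
      congr 1; funext u
      by_cases hu : u = σ
      · simp [DTy.prob, hu]
      · simp [DTy.prob, hu, Ne.symm hu]
  | .cons σ p μ, t => by
      rw [DTy.substSize, DTy.prob, DTy.prob_substSize i s μ t,
        ← tsum_ite_eq σ fun u => if u.substSize i s = t then p else 0, ← ENNReal.tsum_add]
      congr 1; funext u
      by_cases hu : u = σ
      · subst hu
        by_cases ht : u.substSize i s = t <;> simp [DTy.prob, ht]
      · simp [DTy.prob, hu, Ne.symm hu]

open Classical in
theorem DTy.prob_substSize_eq_sum (i : ℕ) (s : Size) (μ : DTy) (t : STy) :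
    (μ.substSize i s).prob t =
      ∑ b with (μ.toList.get b).1.substSize i s = t, (μ.toList.get b).2 := by
  rw [DTy.prob_eq_sum, sum_filter, sum_filter]
  exact Fintype.sum_equiv (finCongr (μ.length_toList_substSize i s)) _ _ fun c => by
    simp only [DTy.get_toList_substSize]; rfl

theorem DTy.le.substSize (i : ℕ) (s : Size) {ν μ : DTy} (h : ν.le μ) :
    (ν.substSize i s).le (μ.substSize i s) := fun t => by
  classical
  rw [DTy.prob_substSize, DTy.prob_substSize]
  exact ENNReal.tsum_le_tsum fun u => by split_ifs <;> simp [h u]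

/-- Proportional allocation: within each fibre `t`, the demand is spread over the supplies
`min (P b) (demand t)`, which are finite and still cover the demand. -/
theorem exists_transport {ι κ α : Type*} [Fintype ι] [Fintype κ] [DecidableEq α]
    (τ : ι → α) (q : ι → ℝ≥0∞) (σ : κ → α) (P : κ → ℝ≥0∞) (hq : ∀ k, q k ≠ ∞)
    (h : ∀ t, ∑ k with τ k = t, q k ≤ ∑ b with σ b = t, P b) :
    ∃ A : ι → κ → ℝ≥0∞, (∀ k b, σ b ≠ τ k → A k b = 0) ∧ (∀ k, ∑ b, A k b = q k) ∧
      ∀ b, ∑ k, A k b ≤ P b := by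
  set demand : α → ℝ≥0∞ := fun t => ∑ k with τ k = t, q k
  set P' : κ → ℝ≥0∞ := fun b => min (P b) (demand (σ b))
  set supply : α → ℝ≥0∞ := fun t => ∑ b with σ b = t, P' b
  have hdemand_ne_top : ∀ t, demand t ≠ ∞ := fun t => ENNReal.sum_ne_top.2 fun k _ => hq k
  have hsupply_ne_top : ∀ t, supply t ≠ ∞ := fun t => ENNReal.sum_ne_top.2 fun b hb =>
    ne_top_of_le_ne_top (hdemand_ne_top t) ((min_le_right _ _).trans_eq (by
      rw [(mem_filter.1 hb).2]))
  have hcover : ∀ t, demand t ≤ supply t := by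
    intro t
    by_cases hbig : ∃ b, σ b = t ∧ demand t ≤ P b
    · obtain ⟨b, hb, hle⟩ := hbig
      calc demand t = P' b := by simp only [P', hb, min_eq_right hle]
        _ ≤ supply t := single_le_sum (fun _ _ => zero_le) (by simp [hb])
    · push Not at hbig
      refine (h t).trans (sum_le_sum fun b hb => ?_)
      have hb : σ b = t := (mem_filter.1 hb).2
      simp only [P', hb, min_eq_left (hbig b hb).le, le_refl]
  have hq_le : ∀ k, q k ≤ demand (τ k) := fun k =>
    single_le_sum (fun _ _ => zero_le) (by simp)
  refine ⟨fun k b => if σ b = τ k then q k * (P' b / supply (τ k)) else 0,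
    fun k b hb => if_neg hb, fun k => ?_, fun b => ?_⟩
  · rw [← sum_filter, ← mul_sum]
    by_cases h0 : supply (τ k) = 0
    · have : q k = 0 := le_antisymm ((hq_le k).trans (h0 ▸ hcover (τ k))) (zero_le)
      simp [this]
    · simp only [div_eq_mul_inv, ← sum_mul]
      rw [ENNReal.mul_inv_cancel h0 (hsupply_ne_top _), mul_one]
  · calc ∑ k, (if σ b = τ k then q k * (P' b / supply (τ k)) else 0)
        = demand (σ b) * (P' b / supply (σ b)) := by
          rw [← sum_filter, sum_mul]
          exact sum_congr (by simp [eq_comm]) fun k hk => by rw [(mem_filter.1 hk).2]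
      _ ≤ supply (σ b) * (P' b / supply (σ b)) := mul_le_mul_left (hcover _) _
      _ ≤ P' b := ENNReal.mul_div_le
      _ ≤ P b := min_le_left _ _

/-- The witnesses `p_{ij}`, `q_{ij}` of the definition of `DRed`, for an arbitrary finite index
set of entries `j` with weights `w j` and value sets `S j q = VRed^q_{σ_j}`. -/
def IsCoupling {ι : Type*} [Fintype ι] {n : ℕ} (S : ι → ℝ≥0∞ → Set Val) (w : ι → ℝ≥0∞)
    (V : Fin n → Val) (pr : Fin n → ℝ≥0∞) (r : ℝ≥0∞) : Prop :=
  ∃ pm qm : Fin n → ι → ℝ≥0∞,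
    (∀ a b, pm a b ≤ 1) ∧ (∀ a b, qm a b ≤ 1) ∧ (∀ a b, V a ∈ S b (qm a b)) ∧
    (∀ a, ∑ b, pm a b = pr a) ∧ (∀ b, ∑ a, pm a b = w b) ∧ r ≤ ∑ a, ∑ b, qm a b * pm a b

namespace IsCoupling

variable {ι ι' : Type*} [Fintype ι] [Fintype ι'] {n : ℕ} {S : ι → ℝ≥0∞ → Set Val}
  {w : ι → ℝ≥0∞} {V : Fin n → Val} {pr : Fin n → ℝ≥0∞} {r : ℝ≥0∞}

theorem comp_equiv (h : IsCoupling S w V pr r) (e : ι' ≃ ι) :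
    IsCoupling (fun c => S (e c)) (fun c => w (e c)) V pr r := by
  obtain ⟨pm, qm, h1, h2, hmem, hrow, hcol, hbound⟩ := h
  refine ⟨fun a c => pm a (e c), fun a c => qm a (e c), fun a c => h1 a _, fun a c => h2 a _,
    fun a c => hmem a _, fun a => ?_, fun c => hcol _, ?_⟩
  · rw [e.sum_comp (pm a), hrow]
  · exact hbound.trans_eq (sum_congr rfl fun a _ => (e.sum_comp fun b => qm a b * pm a b).symm)

theorem comp_equiv_iff (e : ι' ≃ ι) :
    IsCoupling (fun c => S (e c)) (fun c => w (e c)) V pr r ↔ IsCoupling S w V pr r :=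
  ⟨fun h => by simpa using h.comp_equiv e.symm, fun h => h.comp_equiv e⟩

theorem weight_ne_top (h : IsCoupling S w V pr r) (b : ι) : w b ≠ ∞ := by
  obtain ⟨pm, -, h1, -, -, -, hcol, -⟩ := h
  refine ne_top_of_le_ne_top (ENNReal.natCast_ne_top n) ?_
  calc w b = ∑ a, pm a b := (hcol b).symm
    _ ≤ ∑ _a : Fin n, 1 := sum_le_sum fun a _ => h1 a b
    _ = n := by simp

/-- The witnesses of entry `k` are split among the fibre `f c = k` in proportion to the
weights `w' c`. -/
theorem refine [DecidableEq ι] {S' : ι' → ℝ≥0∞ → Set Val} {w' : ι' → ℝ≥0∞} (f : ι' → ι)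
    (hfib : ∀ k, ∑ c with f c = k, w' c = w k)
    (hmem : ∀ c, w' c ≠ 0 → ∀ q, S (f c) q ⊆ S' c q) (hzero : ∀ c q, S (f c) q ⊆ S' c 0)
    (h : IsCoupling S w V pr r) : IsCoupling S' w' V pr r := by
  have hw_ne_top := h.weight_ne_top
  obtain ⟨pm, qm, h1, h2, hV, hrow, hcol, hbound⟩ := h
  have hpm_zero : ∀ a k, w k = 0 → pm a k = 0 := fun a k hk =>
    sum_eq_zero_iff.1 ((hcol k).trans hk) a (mem_univ a)
  have hw'_le : ∀ c, w' c ≤ w (f c) := fun c =>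
    (hfib (f c)).symm ▸ single_le_sum (fun _ _ => zero_le) (by simp)
  set pm' : Fin n → ι' → ℝ≥0∞ := fun a c => pm a (f c) * (w' c / w (f c))
  have hsplit : ∀ (g : ι → ℝ≥0∞) a, ∑ c, g (f c) * pm' a c = ∑ k, g k * pm a k := by
    intro g a
    rw [← sum_fiberwise univ f]
    refine sum_congr rfl fun k _ => ?_
    calc ∑ c with f c = k, g (f c) * pm' a c = ∑ c with f c = k, g k * pm a k * (w' c / w k) :=
          sum_congr rfl fun c hc => by simp only [pm', (mem_filter.1 hc).2, mul_assoc]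
      _ = g k * pm a k := by
          rw [← mul_sum]
          by_cases hk : w k = 0
          · simp [hpm_zero a k hk]
          · simp only [div_eq_mul_inv, ← sum_mul, hfib k,
              ENNReal.mul_inv_cancel hk (hw_ne_top k), mul_one]
  refine ⟨pm', fun a c => if w' c = 0 then 0 else qm a (f c), fun a c => ?_, fun a c => ?_,
    fun a c => ?_, fun a => ?_, fun c => ?_, ?_⟩
  · exact mul_le_one' (h1 a _) (ENNReal.div_le_of_le_mul (by simpa using hw'_le c))
  · dsimp only
    split_ifs
    exacts [zero_le_one, h2 a _]
  · dsimp only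
    split_ifs with hc
    exacts [hzero c _ (hV a _), hmem c hc _ (hV a _)]
  · simpa only [Pi.one_apply, one_mul, hrow] using hsplit 1 a
  · rw [← sum_mul, hcol]
    by_cases hk : w (f c) = 0
    · simp [le_antisymm (hk ▸ hw'_le c) zero_le]
    · exact ENNReal.mul_div_cancel hk (hw_ne_top _)
  · refine hbound.trans_eq (sum_congr rfl fun a _ => ((hsplit (qm a) a).symm.trans ?_))
    refine sum_congr rfl fun c _ => ?_
    dsimp only
    split_ifs with hc
    · simp [pm', hc]
    · rfl

end IsCoupling

theorem mem_mkDRed_iff {vred : STy → ℝ≥0∞ → Set Val} {ν : DTy} {ι : Type*} [Fintype ι]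
    (e : Fin ν.toList.length ≃ ι) (τ : ι → STy) (w : ι → ℝ≥0∞)
    (he : ∀ c, ν.toList.get c = (τ (e c), w (e c))) {D : Distr Val} {r : ℝ≥0∞} :
    D ∈ mkDRed vred ν r ↔ D.FinSupp ∧ ∃ (n : ℕ) (V : Fin n → Val) (pr : Fin n → ℝ≥0∞),
      PseudoRep D V pr ∧ IsCoupling (fun b q => vred (τ b) q) w V pr r := by
  have hS : (fun c q => vred (ν.toList.get c).1 q) = fun c q => vred (τ (e c)) q := by
    simp only [he]
  have hw : (fun c => (ν.toList.get c).2) = fun c => w (e c) := by simp only [he]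
  simp only [← IsCoupling.comp_equiv_iff e, ← hS, ← hw]
  rfl

def DTy.ofList : (l : List (STy × ℝ≥0∞)) → l ≠ [] → DTy
  | [e], _ => .single e.1 e.2
  | e :: e' :: l, _ => .cons e.1 e.2 (DTy.ofList (e' :: l) (List.cons_ne_nil _ _))

theorem DTy.toList_ofList : ∀ (l : List (STy × ℝ≥0∞)) (hl : l ≠ []), (DTy.ofList l hl).toList = l
  | [_], _ => rfl
  | e :: e' :: l, _ => by rw [DTy.ofList, DTy.toList, DTy.toList_ofList (e' :: l)]

theorem DTy.exists_toList_get_eq {ι : Type*} [Fintype ι] [Nonempty ι]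
    (g : ι → STy × ℝ≥0∞) :
    ∃ (ν : DTy) (e : Fin ν.toList.length ≃ ι), ∀ c, ν.toList.get c = g (e c) := by
  set E := Fintype.equivFin ι
  set l := List.ofFn fun j => g (E.symm j)
  have hl : l ≠ [] := by simp [l, List.ofFn_eq_nil_iff, Fintype.card_ne_zero]
  have hlen : (DTy.ofList l hl).toList.length = Fintype.card ι := by
    simp [DTy.toList_ofList, l]
  exact ⟨DTy.ofList l hl, (finCongr hlen).trans E.symm, fun c => by
    simp [DTy.toList_ofList, l, List.get_eq_getElem]; rfl⟩

theorem natVal_simpTyV (Γ : SCtx) : ∀ n : ℕ, SimpTyV Γ (natVal n) .nat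
  | 0 => .zero
  | n + 1 => .succ (natVal_simpTyV Γ n)

theorem simpTyV_of_mem_VRed {κ : SimpleTy} {τ : STy} {ρ : SEnv} {q : ℝ≥0∞} {V : Val}
    (h : V ∈ VRed κ τ ρ q) : SimpTyV SCtx.empty V κ := by
  match κ, τ, h with
  | .nat, .nat _, ⟨n, hn, _⟩ => exact hn ▸ natVal_simpTyV _ n
  | .arrow _ _, .arrow _ _, h => exact h.1

/-- At degree `0` the sizes are irrelevant: `VRed^0_τ` contains every closed value of the
underlying simple type. -/
theorem mem_VRed_zero_of_mem {κ : SimpleTy} {τ τ' : STy} {ρ ρ' : SEnv} {q : ℝ≥0∞} {V : Val}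
    (h : V ∈ VRed κ τ ρ q) (hτ' : τ'.erase = κ) : V ∈ VRed κ τ' ρ' 0 := by
  match κ, τ, τ', h, hτ' with
  | .nat, .nat _, .nat _, ⟨n, hn, _⟩, _ => exact ⟨n, hn, fun h0 => absurd h0 (lt_irrefl 0)⟩
  | .arrow _ _, .arrow _ _, .arrow _ _, h, _ =>
    refine ⟨h.1, fun q _ _ w hw => ⟨.app (fun _ => rfl) h.1 (simpTyV_of_mem_VRed hw), ?_⟩⟩
    simp

open Classical in
/-- Each entry `τ_k` of `ν` is split among the entries `σ_b` of `μ` with `σ_b[s/i] = τ_k` by a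
transport plan `A`; an unmatched pair `(k, b)` gets weight zero and keeps the type `τ_k`, which
has the right underlying simple type. -/
theorem exists_le_mem_mkDRed_of_le_substSize {i : ℕ} {s : Size} {κ : SimpleTy} {ρ ρ' : SEnv}
    (hV : ∀ τ p, VRed κ (τ.substSize i s) ρ p = VRed κ τ ρ' p) {μ ν : DTy}
    (hle : ν.le (μ.substSize i s)) (herase : ∀ e ∈ ν.toList, e.1.erase = κ) {D : Distr Val}
    {r : ℝ≥0∞} (hD : D ∈ mkDRed (fun τ q => VRed κ τ ρ q) ν r) :
    ∃ ν' : DTy, ν'.le μ ∧ (∀ e ∈ ν'.toList, e.1.erase = κ) ∧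
      D ∈ mkDRed (fun τ q => VRed κ τ ρ' q) ν' r := by
  set τf := fun k => (ν.toList.get k).1
  set qf := fun k => (ν.toList.get k).2
  set σf := fun b => (μ.toList.get b).1
  set Pf := fun b => (μ.toList.get b).2
  obtain ⟨hfin, n, V, pr, hrep, hcoup⟩ :=
    (mem_mkDRed_iff (Equiv.refl _) τf qf fun _ => rfl).1 hD
  have hsupply : ∀ t, ∑ k with τf k = t, qf k ≤ ∑ b with (σf b).substSize i s = t, Pf b :=
    fun t => (DTy.prob_eq_sum ν t).symm.trans_le ((hle t).trans_eq (μ.prob_substSize_eq_sum i s t))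
  obtain ⟨A, hA_zero, hA_row, hA_col⟩ :=
    exists_transport τf qf (fun b => (σf b).substSize i s) Pf hcoup.weight_ne_top hsupply
  set τ' : Fin ν.toList.length × Fin μ.toList.length → STy := fun c =>
    if (σf c.2).substSize i s = τf c.1 then σf c.2 else τf c.1
  have herase_τf : ∀ k, (τf k).erase = κ := fun k => herase _ (List.get_mem _ _)
  have herase' : ∀ c, (τ' c).erase = κ := fun c => by
    by_cases hc : (σf c.2).substSize i s = τf c.1
    · simp only [τ', if_pos hc, ← herase_τf c.1, ← hc, STy.erase_substSize]
    · simp only [τ', if_neg hc, herase_τf]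
  have : Nonempty (Fin ν.toList.length × Fin μ.toList.length) :=
    ⟨(⟨0, ν.toList_length_pos⟩, ⟨0, μ.toList_length_pos⟩)⟩
  obtain ⟨ν', e, he⟩ := DTy.exists_toList_get_eq fun c => (τ' c, A c.1 c.2)
  refine ⟨ν', fun t => ?_, fun x hx => ?_, ?_⟩
  · rw [DTy.prob_eq_sum, DTy.prob_eq_sum, sum_filter, sum_filter,
      Fintype.sum_equiv e _ (fun c => if τ' c = t then A c.1 c.2 else 0) fun c => by rw [he c],
      Fintype.sum_prod_type, sum_comm]
    refine sum_le_sum fun b _ => ?_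
    by_cases hb : σf b = t
    · rw [if_pos hb]
      exact (sum_le_sum fun k _ => (by split_ifs <;> simp : _ ≤ A k b)).trans (hA_col b)
    · refine (sum_eq_zero fun k _ => ?_).trans_le zero_le
      by_cases hc : (σf b).substSize i s = τf k
      · simp [τ', hc, hb]
      · simp [hA_zero k b hc]
  · obtain ⟨c, rfl⟩ := List.mem_iff_get.1 hx
    rw [he c]
    exact herase' _
  · refine (mem_mkDRed_iff e τ' (fun c => A c.1 c.2) he).2 ⟨hfin, n, V, pr, hrep,
      hcoup.refine Prod.fst (fun k => ?_) (fun c hc q => ?_) fun c q => ?_⟩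
    · rw [sum_filter, Fintype.sum_prod_type, ← hA_row k]
      simp
    · have hmatch : (σf c.2).substSize i s = τf c.1 := not_imp_comm.1 (hA_zero _ _) hc
      simp only [τ', if_pos hmatch, ← hmatch, hV, subset_refl]
    · exact fun W hW => mem_VRed_zero_of_mem hW (herase' c)

theorem mkDRed_substSize (i : ℕ) (s : Size) {vred vred' : STy → ℝ≥0∞ → Set Val}
    (hv : ∀ τ p, vred (τ.substSize i s) p = vred' τ p) (ν : DTy) (r : ℝ≥0∞) :
    mkDRed vred (ν.substSize i s) r = mkDRed vred' ν r := by
  ext D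
  rw [mem_mkDRed_iff (finCongr (ν.length_toList_substSize i s))
      (fun c => (ν.toList.get c).1.substSize i s) (fun c => (ν.toList.get c).2)
      (DTy.get_toList_substSize i s ν),
    mem_mkDRed_iff (Equiv.refl _) (fun c => (ν.toList.get c).1) (fun c => (ν.toList.get c).2)
      fun _ => rfl]
  simp only [hv]

theorem mkTRed_substSize {i : ℕ} {s : Size} {κ : SimpleTy} {ρ ρ' : SEnv}
    (hV : ∀ τ p, VRed κ (τ.substSize i s) ρ p = VRed κ τ ρ' p) (μ : DTy) (p : ℝ≥0∞) :
    mkTRed κ (fun τ q => VRed κ τ ρ q) (μ.substSize i s) p =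
      mkTRed κ (fun τ q => VRed κ τ ρ' q) μ p := by
  ext M
  refine and_congr_right fun _ => forall₂_congr fun r _ => ⟨?_, ?_⟩
  · rintro ⟨ν, hle, herase, n, hn⟩
    obtain ⟨ν', hle', herase', hn'⟩ := exists_le_mem_mkDRed_of_le_substSize hV hle herase hn
    exact ⟨ν', hle', herase', n, hn'⟩
  · rintro ⟨ν, hle, herase, n, hn⟩
    refine ⟨ν.substSize i s, hle.substSize i s, fun e he => ?_, n, ?_⟩
    · rw [DTy.toList_substSize] at he
      obtain ⟨e', he', rfl⟩ := List.mem_map.1 he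
      rw [STy.erase_substSize]
      exact herase e' he'
    · rwa [mkDRed_substSize i s hV]

theorem VRed_substSize (i : ℕ) (s : Size) : ∀ (κ : SimpleTy) (σ : STy) (ρ : SEnv) (p : ℝ≥0∞),
    VRed κ (σ.substSize i s) ρ p = VRed κ σ (Function.update ρ i (s.interp ρ)) p
  | .nat, .nat r, ρ, p => by simp [VRed, STy.substSize, Size.interp_subst]
  | .nat, .arrow _ _, _, _ => rfl
  | .arrow _ _, .nat _, _, _ => rfl
  | .arrow κ κ', .arrow σ μ, ρ, p => by
    ext v
    simp only [VRed, STy.substSize, Set.mem_ofPred_eq, VRed_substSize i s κ σ,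
      mkTRed_substSize (VRed_substSize i s κ' · ρ)]

/-- Size commutation: if `s = ∞` or the spine variable of `s` is different
from `i`, then `VRed^p_{σ[s/i],ρ} = VRed^p_{σ,ρ[i↦⟦s⟧_ρ]}`, and similarly for `DRed`
and `TRed`. -/
theorem size_commutation (i : ℕ) (s : Size) (hs : Size.spine s ≠ some i)
    (σ : STy) (μ : DTy) (ρ : SEnv) (p : ℝ≥0∞) (hp : p ≤ 1) :
    (VRedS (STy.substSize i s σ) ρ p =
      VRedS σ (Function.update ρ i (Size.interp ρ s)) p) ∧
    (DRedS (DTy.substSize i s μ) ρ p =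
      DRedS μ (Function.update ρ i (Size.interp ρ s)) p) ∧
    (TRedS (DTy.substSize i s μ) ρ p =
      TRedS μ (Function.update ρ i (Size.interp ρ s)) p) := by
  have hV := VRed_substSize i s μ.eraseU
  refine ⟨?_, ?_, ?_⟩
  · rw [VRedS, VRedS, STy.erase_substSize]
    exact VRed_substSize i s σ.erase σ ρ p
  · rw [DRedS, DRedS, DTy.eraseU_substSize]
    exact mkDRed_substSize i s (hV · ρ) μ p
  · rw [TRedS, TRedS, DTy.eraseU_substSize]
    exact mkTRed_substSize (hV · ρ) μ p
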